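/- (Kramers' degeneracy theorem.) Let E be a complex inner product space, let Θ : E → E be a time reversal operator (a conjugate-linear antiunitary map with Θ² = −1), and let H : E → E be a ℂ-linear symmetric operator (⟪Hφ, ψ⟫ = ⟪φ, Hψ⟫ for all φ, ψ) that commutes with Θ, i.e., Θ ∘ H = H ∘ Θ. If φ ≠ 0 is an eigenvector of H with eigenvalue μ ∈ ℂ, then μ is real, Θφ is a nonzero eigenvector of H with the same eigenvalue μ, and ⟪φ, Θφ⟫ = 0; in particular φ and Θφ are linearly independent, so every eigenspace of H has dimension at least 2. -/

import Mathlib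

/-!
An eigenvalue of a symmetric operator is real, so conjugate-linearity of `Θ` together with
`Θ H = H Θ` makes `Θ φ` an eigenvector for the same eigenvalue. Antiunitarity and `Θ² = -1` give
`⟪φ, Θ φ⟫ = ⟪Θ (Θ φ), Θ φ⟫ = -⟪φ, Θ φ⟫`, so `φ` and `Θ φ` are orthogonal, hence independent.
-/

open scoped ComplexInnerProductSpace

section ConjLinear

variable {E : Type*} [AddCommGroup E] [Module ℂ E] {Θ : E → E}

theorem map_smul_of_map_smul_add
    (hconj : ∀ (a : ℂ) (φ ψ : E), Θ (a • φ + ψ) = (starRingEnd ℂ a) • Θ φ + Θ ψ)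
    (a : ℂ) (φ : E) : Θ (a • φ) = starRingEnd ℂ a • Θ φ := by
  have hzero : Θ 0 = 0 := by simpa using hconj 1 0 0
  simpa [hzero] using hconj a φ 0

theorem apply_map_eq_conj_smul_of_commute
    (hsmul : ∀ (a : ℂ) (φ : E), Θ (a • φ) = starRingEnd ℂ a • Θ φ)
    {H : E →ₗ[ℂ] E} (hcomm : ∀ φ : E, Θ (H φ) = H (Θ φ)) {φ : E} {μ : ℂ}
    (heig : H φ = μ • φ) : H (Θ φ) = starRingEnd ℂ μ • Θ φ := by
  rw [← hcomm, heig, hsmul]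

end ConjLinear

section Antiunitary

variable {𝕜 E : Type*} [RCLike 𝕜] [NormedAddCommGroup E] [InnerProductSpace 𝕜 E] {Θ : E → E}

theorem map_ne_zero_of_inner_map_map
    (hanti : ∀ φ ψ : E, inner 𝕜 (Θ ψ) (Θ φ) = inner 𝕜 φ ψ) {φ : E} (hφ : φ ≠ 0) :
    Θ φ ≠ 0 := by
  rw [← inner_self_ne_zero (𝕜 := 𝕜), hanti]
  exact inner_self_ne_zero.mpr hφ

theorem inner_self_map_eq_zero_of_map_map_eq_neg
    (hanti : ∀ φ ψ : E, inner 𝕜 (Θ ψ) (Θ φ) = inner 𝕜 φ ψ) (hsq : ∀ φ : E, Θ (Θ φ) = -φ)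
    (φ : E) : inner 𝕜 φ (Θ φ) = 0 := by
  have h : inner 𝕜 φ (Θ φ) = -inner 𝕜 φ (Θ φ) :=
    calc inner 𝕜 φ (Θ φ) = inner 𝕜 (Θ (Θ φ)) (Θ φ) := (hanti φ (Θ φ)).symm
      _ = -inner 𝕜 φ (Θ φ) := by rw [hsq, inner_neg_left]
  exact self_eq_neg.mp h

end Antiunitary

theorem linearIndependent_pair_of_inner_eq_zero {𝕜 E : Type*} [RCLike 𝕜]
    [NormedAddCommGroup E] [InnerProductSpace 𝕜 E] {x y : E} (hx : x ≠ 0) (hy : y ≠ 0)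
    (hxy : inner 𝕜 x y = 0) : LinearIndependent 𝕜 ![x, y] := by
  have hyx : inner 𝕜 y x = 0 := inner_eq_zero_symm.mp hxy
  refine linearIndependent_of_ne_zero_of_inner_eq_zero (fun i => ?_) fun i j hij => ?_
  · fin_cases i <;> assumption
  · fin_cases i <;> fin_cases j <;> simp_all

theorem Submodule.two_le_rank_of_linearIndependent_pair {R M : Type*} [Ring R] [Nontrivial R]
    [AddCommGroup M] [Module R M] {p : Submodule R M} {x y : M} (hx : x ∈ p) (hy : y ∈ p)
    (hxy : LinearIndependent R ![x, y]) : 2 ≤ Module.rank R p := by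
  have hpair : LinearIndependent R ![(⟨x, hx⟩ : p), ⟨y, hy⟩] := by
    refine .of_comp p.subtype ?_
    convert hxy using 1
    ext i
    fin_cases i <;> rfl
  simpa using hpair.cardinal_lift_le_rank

/-- Kramers' degeneracy theorem: if `H` is a `ℂ`-linear symmetric
operator commuting with a time reversal operator `Θ` (conjugate-linear, antiunitary,
`Θ² = -1`), and `φ ≠ 0` is an eigenvector of `H` with eigenvalue `μ`, then `μ` is real,
`Θφ` is a nonzero eigenvector of `H` with eigenvalue `μ`, `⟪φ, Θφ⟫ = 0`, the pair
`(φ, Θφ)` is linearly independent, and the eigenspace of `H` for `μ` has dimension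
at least `2`. -/
theorem kramers_degeneracy {E : Type*} [NormedAddCommGroup E] [InnerProductSpace ℂ E]
    (Θ : E → E)
    (hconj : ∀ (a : ℂ) (φ ψ : E), Θ (a • φ + ψ) = (starRingEnd ℂ a) • Θ φ + Θ ψ)
    (hanti : ∀ φ ψ : E, ⟪Θ ψ, Θ φ⟫ = ⟪φ, ψ⟫)
    (hsq : ∀ φ : E, Θ (Θ φ) = -φ)
    (H : E →ₗ[ℂ] E)
    (hsymm : ∀ φ ψ : E, ⟪H φ, ψ⟫ = ⟪φ, H ψ⟫)
    (hcomm : ∀ φ : E, Θ (H φ) = H (Θ φ))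
    (φ : E) (hφ : φ ≠ 0) (μ : ℂ) (heig : H φ = μ • φ) :
    μ.im = 0 ∧ Θ φ ≠ 0 ∧ H (Θ φ) = μ • Θ φ ∧ ⟪φ, Θ φ⟫ = 0 ∧
      LinearIndependent ℂ ![φ, Θ φ] ∧
      2 ≤ Module.rank ℂ (Module.End.eigenspace H μ) := by
  have hφ_mem : φ ∈ Module.End.eigenspace H μ := Module.End.mem_eigenspace_iff.mpr heig
  have hμ_real : starRingEnd ℂ μ = μ :=
    LinearMap.IsSymmetric.conj_eigenvalue_eq_self hsymm
      (Module.End.hasEigenvalue_of_hasEigenvector ⟨hφ_mem, hφ⟩)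
  have hΘφ : Θ φ ≠ 0 := map_ne_zero_of_inner_map_map hanti hφ
  have hΘφ_eig : H (Θ φ) = μ • Θ φ := by
    rw [apply_map_eq_conj_smul_of_commute (map_smul_of_map_smul_add hconj) hcomm heig, hμ_real]
  have horth : ⟪φ, Θ φ⟫ = 0 := inner_self_map_eq_zero_of_map_map_eq_neg hanti hsq φ
  have hli : LinearIndependent ℂ ![φ, Θ φ] :=
    linearIndependent_pair_of_inner_eq_zero hφ hΘφ horth
  exact ⟨Complex.conj_eq_iff_im.mp hμ_real, hΘφ, hΘφ_eig, horth, hli,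
    Submodule.two_le_rank_of_linearIndependent_pair hφ_mem
      (Module.End.mem_eigenspace_iff.mpr hΘφ_eig) hli⟩
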